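/- arXiv:1009.3603 — 3 statements merged into one kernel-verified Lean document; each statement's English description precedes it below -/
import Mathlib

section
/- Let f : [0,∞) → ℝ be continuous and let A ⊂ (0,∞) be a set such that for every t ∈ A there exists α < 1/2 with liminf_{s → t} |f(s)−f(t)| / |t−s|^α > 0. Then almost surely every point of Z(B−f) ∩ A is an isolated point of Z(B−f). -/
open MeasureTheory ProbabilityTheory Filter Set Topology
open scoped ENNReal

/-- `B` is a standard one-dimensional Brownian motion started at `0` under the
probability measure `μ`: it starts at `0`, has continuous paths, Gaussian increments
with mean `0` and variance given by the time increment, and independent increments. -/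
structure IsBrownianMotion {Ω : Type*} [MeasurableSpace Ω]
    (μ : Measure Ω) (B : ℝ → Ω → ℝ) : Prop where
  isProbabilityMeasure : IsProbabilityMeasure μ
  measurable : ∀ t : ℝ, Measurable (B t)
  start : ∀ ω, B 0 ω = 0
  cont_paths : ∀ ω, Continuous fun t => B t ω
  gauss_incr : ∀ s t : ℝ, 0 ≤ s → s ≤ t →
    μ.map (fun ω => B t ω - B s ω) = gaussianReal 0 (Real.toNNReal (t - s))
  indep_incr : ∀ (n : ℕ) (u : ℕ → ℝ), (∀ i, 0 ≤ u i) → Monotone u →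
    iIndepFun
      (fun (i : Fin n) ω => B (u (i.1 + 1)) ω - B (u i.1) ω) μ

/-- The set of zeros of `g` in `(0, ∞)`. -/
def zeroSet (g : ℝ → ℝ) : Set ℝ := {t : ℝ | 0 < t ∧ g t = 0}

/-- `t` is an isolated point of the set `Z ⊆ ℝ`. -/
def IsolatedPointOf (Z : Set ℝ) (t : ℝ) : Prop :=
  t ∈ Z ∧ ∃ ε > 0, ∀ s ∈ Z, |s - t| < ε → s = t

/-!
Brownian paths are almost surely locally `β`-Hölder for every `β < 1/2`: a Gaussian tail bound
and Borel–Cantelli bound all dyadic increments of mesh `2⁻ⁿ` by `2^(-βn)` for large `n`, and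
chaining through the dyadic approximations `⌊2ⁿ t⌋ / 2ⁿ` extends this to all pairs of times.
At a zero `t ∈ A` with reverse Hölder exponent `α`, pick `β ∈ (α, 1/2)`: near `t`,
`|B s - B t| ≤ C |s - t|^β` is eventually smaller than `c |s - t|^α < |f s - f t|`, so `B - f`
has no zero `s ≠ t` close to `t`.
-/

open Real
open scoped NNReal

noncomputable def dyadicFloor (n : ℕ) (t : ℝ) : ℝ := ⌊t * 2 ^ n⌋₊ / 2 ^ n

def DyadicIncrementsLE (g : ℝ → ℝ) (N n : ℕ) (b : ℝ) : Prop :=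
  ∀ k < N * 2 ^ n, |g ((k + 1) / 2 ^ n) - g (k / 2 ^ n)| ≤ b

section Dyadic

variable {g : ℝ → ℝ} {r s t : ℝ} {N n : ℕ}

lemma dyadicFloor_le (ht : 0 ≤ t) (n : ℕ) : dyadicFloor n t ≤ t :=
  (div_le_iff₀ (by positivity)).2 (Nat.floor_le (by positivity))

lemma lt_dyadicFloor_add (t : ℝ) (n : ℕ) : t < dyadicFloor n t + 1 / 2 ^ n := by
  rw [dyadicFloor, ← add_div, lt_div_iff₀ (by positivity)]
  exact Nat.lt_floor_add_one _

lemma tendsto_dyadicFloor (ht : 0 ≤ t) : Tendsto (dyadicFloor · t) atTop (𝓝 t) := by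
  have hlow : Tendsto (fun n : ℕ => t - 1 / 2 ^ n) atTop (𝓝 t) := by
    simpa using tendsto_const_nhds.sub
      (tendsto_pow_atTop_nhds_zero_of_lt_one (by norm_num : (0 : ℝ) ≤ 1 / 2) (by norm_num))
  refine tendsto_of_tendsto_of_tendsto_of_le_of_le hlow tendsto_const_nhds (fun n => ?_)
    (dyadicFloor_le ht)
  linarith [lt_dyadicFloor_add t n]

lemma natFloor_mul_two_pow_lt (ht : t ∈ Ico (0 : ℝ) N) (n : ℕ) : ⌊t * 2 ^ n⌋₊ < N * 2 ^ n := by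
  rw [Nat.floor_lt (by have := ht.1; positivity)]
  push_cast
  exact mul_lt_mul_of_pos_right ht.2 (by positivity)

lemma natFloor_mul_two_pow_succ_div_two (t : ℝ) (n : ℕ) :
    ⌊t * 2 ^ (n + 1)⌋₊ / 2 = ⌊t * 2 ^ n⌋₊ := by
  rw [← Nat.floor_div_natCast]
  congr 1
  push_cast
  ring

lemma abs_sub_dyadicFloor_succ_le (hr : 0 ≤ r) (H : DyadicIncrementsLE g N (n + 1) (r ^ (n + 1)))
    (ht : t ∈ Ico (0 : ℝ) N) :
    |g (dyadicFloor (n + 1) t) - g (dyadicFloor n t)| ≤ r ^ (n + 1) := by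
  have hhalf := natFloor_mul_two_pow_succ_div_two t n
  have hlt := natFloor_mul_two_pow_lt ht (n + 1)
  set j := ⌊t * 2 ^ (n + 1)⌋₊
  set k := ⌊t * 2 ^ n⌋₊
  have hk : dyadicFloor n t = ((2 * k : ℕ) : ℝ) / 2 ^ (n + 1) := by
    rw [dyadicFloor]; push_cast; field_simp; ring
  have hj : dyadicFloor (n + 1) t = (j : ℝ) / 2 ^ (n + 1) := rfl
  rcases (by omega : j = 2 * k ∨ j = 2 * k + 1) with hj2 | hj2
  · rw [hk, hj, hj2, sub_self, abs_zero]
    positivity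
  · rw [hk, hj, hj2, Nat.cast_succ]
    exact H (2 * k) (by omega)

lemma abs_sub_dyadicFloor_le (hg : Continuous g) (hr : 0 ≤ r) (hr1 : r < 1)
    (H : ∀ m > n, DyadicIncrementsLE g N m (r ^ m)) (ht : t ∈ Ico (0 : ℝ) N) :
    |g t - g (dyadicFloor n t)| ≤ r ^ (n + 1) / (1 - r) := by
  have hstep : ∀ k, dist (g (dyadicFloor (k + n) t)) (g (dyadicFloor (k + 1 + n) t))
      ≤ r ^ (n + 1) * r ^ k := by
    intro k
    have := abs_sub_dyadicFloor_succ_le hr (H (k + n + 1) (by omega)) ht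
    rw [Real.dist_eq, abs_sub_comm, add_right_comm k 1 n]
    calc _ ≤ r ^ (k + n + 1) := this
      _ = r ^ (n + 1) * r ^ k := by ring
  have hlim : Tendsto (fun k => g (dyadicFloor (k + n) t)) atTop (𝓝 (g t)) :=
    (hg.tendsto t).comp ((tendsto_add_atTop_iff_nat n).2 (tendsto_dyadicFloor ht.1))
  rw [abs_sub_comm, ← Real.dist_eq]
  simpa using dist_le_of_le_geometric_of_tendsto r _ hr1 hstep hlim 0

lemma abs_sub_dyadicFloor_le_of_le (hr : 0 ≤ r) (H : DyadicIncrementsLE g N n (r ^ n))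
    (hs : s ∈ Ico (0 : ℝ) N) (ht : t ∈ Ico (0 : ℝ) N) (hst : s ≤ t) (hts : t - s ≤ 1 / 2 ^ n) :
    |g (dyadicFloor n s) - g (dyadicFloor n t)| ≤ r ^ n := by
  have hs0 : 0 ≤ s * 2 ^ n := by have := hs.1; positivity
  have hle : ⌊s * 2 ^ n⌋₊ ≤ ⌊t * 2 ^ n⌋₊ := Nat.floor_le_floor (by gcongr)
  have hle' : ⌊t * 2 ^ n⌋₊ ≤ ⌊s * 2 ^ n⌋₊ + 1 := by
    rw [← Nat.floor_add_one hs0]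
    refine Nat.floor_le_floor ?_
    rw [le_div_iff₀ (by positivity)] at hts
    linarith
  have hlt := natFloor_mul_two_pow_lt ht n
  rcases (by omega : ⌊t * 2 ^ n⌋₊ = ⌊s * 2 ^ n⌋₊ ∨ ⌊t * 2 ^ n⌋₊ = ⌊s * 2 ^ n⌋₊ + 1) with h | h
  · rw [dyadicFloor, dyadicFloor, h, sub_self, abs_zero]
    positivity
  · rw [dyadicFloor, dyadicFloor, h, abs_sub_comm]
    push_cast
    exact H _ (by omega)

lemma abs_sub_le_of_abs_sub_le_one_div_two_pow (hg : Continuous g) (hr : 0 ≤ r) (hr1 : r < 1)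
    (H : ∀ m ≥ n, DyadicIncrementsLE g N m (r ^ m)) (hs : s ∈ Ico (0 : ℝ) N)
    (ht : t ∈ Ico (0 : ℝ) N) (hst : |s - t| ≤ 1 / 2 ^ n) :
    |g s - g t| ≤ (1 + r) / (1 - r) * r ^ n := by
  wlog hle : s ≤ t generalizing s t
  · rw [abs_sub_comm]
    exact this ht hs (by rwa [abs_sub_comm]) (le_of_not_ge hle)
  have hfine : ∀ m > n, DyadicIncrementsLE g N m (r ^ m) := fun m hm => H m hm.le
  have hts : t - s ≤ 1 / 2 ^ n := by rwa [abs_sub_comm, abs_of_nonneg (by linarith)] at hst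
  have h1r : 0 < 1 - r := by linarith
  calc |g s - g t|
      ≤ |g s - g (dyadicFloor n s)| + |g (dyadicFloor n s) - g (dyadicFloor n t)|
          + |g t - g (dyadicFloor n t)| := by
        have := abs_sub_le (g s) (g (dyadicFloor n s)) (g t)
        have := abs_sub_le (g (dyadicFloor n s)) (g (dyadicFloor n t)) (g t)
        rw [abs_sub_comm (g (dyadicFloor n t))] at this
        linarith
    _ ≤ r ^ (n + 1) / (1 - r) + r ^ n + r ^ (n + 1) / (1 - r) := by
        gcongr
        · exact abs_sub_dyadicFloor_le hg hr hr1 hfine hs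
        · exact abs_sub_dyadicFloor_le_of_le hr (H n le_rfl) hs ht hle hts
        · exact abs_sub_dyadicFloor_le hg hr hr1 hfine ht
    _ = (1 + r) / (1 - r) * r ^ n := by
        field_simp
        ring

end Dyadic

theorem exists_abs_sub_le_mul_rpow_of_dyadicIncrementsLE {g : ℝ → ℝ} (hg : Continuous g)
    {β : ℝ} (hβ : 0 < β) {N : ℕ}
    (H : ∀ᶠ n in atTop, DyadicIncrementsLE g N n (((1 / 2 : ℝ) ^ β) ^ n)) :
    ∃ C δ : ℝ, 0 ≤ C ∧ 0 < δ ∧ ∀ s ∈ Ico (0 : ℝ) N, ∀ t ∈ Ico (0 : ℝ) N,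
      |s - t| ≤ δ → |g s - g t| ≤ C * |s - t| ^ β := by
  obtain ⟨n₀, hn₀⟩ := eventually_atTop.1 H
  set r := (1 / 2 : ℝ) ^ β
  have hr0 : 0 ≤ r := by positivity
  have hr1 : r < 1 := Real.rpow_lt_one (by norm_num) (by norm_num) hβ
  have h1r : 0 < 1 - r := by linarith
  refine ⟨(1 + r) / (1 - r) * 2 ^ β, (1 / 2) ^ n₀, by positivity, by positivity, ?_⟩
  intro s hs t ht hst
  rcases (abs_nonneg (s - t)).eq_or_lt with hd | hd
  · obtain rfl : s = t := sub_eq_zero.1 (abs_eq_zero.1 hd.symm)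
    simp [Real.zero_rpow hβ.ne']
  obtain ⟨m, hm1, hm2⟩ := exists_nat_pow_near_of_lt_one hd
    (hst.trans (pow_le_one₀ (by norm_num) (by norm_num))) (by norm_num : (0 : ℝ) < 1 / 2)
    (by norm_num)
  have hmn : n₀ ≤ m := by
    have := (pow_lt_pow_iff_right_of_lt_one₀ (by norm_num) (by norm_num)).1 (hm1.trans_le hst)
    omega
  have hrm : r ^ m < 2 ^ β * |s - t| ^ β :=
    calc r ^ m = ((1 / 2 : ℝ) ^ m) ^ β := Real.rpow_pow_comm (by norm_num) _ _
      _ = 2 ^ β * ((1 / 2 : ℝ) ^ (m + 1)) ^ β := by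
        rw [← Real.mul_rpow (by norm_num) (by positivity)]
        ring_nf
      _ < 2 ^ β * |s - t| ^ β := by gcongr
  calc |g s - g t|
      ≤ (1 + r) / (1 - r) * r ^ m :=
        abs_sub_le_of_abs_sub_le_one_div_two_pow hg hr0 hr1 (fun k hk => hn₀ k (hmn.trans hk))
          hs ht (by rwa [← one_div_pow])
    _ ≤ (1 + r) / (1 - r) * (2 ^ β * |s - t| ^ β) := by gcongr
    _ = (1 + r) / (1 - r) * 2 ^ β * |s - t| ^ β := by ring

lemma measureReal_abs_ge_le_of_map_eq_gaussianReal {Ω : Type*} [MeasurableSpace Ω]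
    {μ : Measure Ω} {X : Ω → ℝ} (hX : Measurable X) {v : ℝ≥0}
    (hXv : μ.map X = gaussianReal 0 v) {ε : ℝ} (hε : 0 ≤ ε) :
    μ.real {ω | ε ≤ |X ω|} ≤ 2 * exp (-ε ^ 2 / (2 * v)) := by
  have hsub : HasSubgaussianMGF X v μ := by
    refine (HasSubgaussianMGF.id_map_iff hX.aemeasurable).1 ?_
    rw [hXv]
    exact ⟨integrable_exp_mul_gaussianReal, fun t => by simp [mgf_id_gaussianReal]⟩
  have hunion : {ω | ε ≤ |X ω|} = {ω | ε ≤ X ω} ∪ {ω | ε ≤ (-X) ω} := by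
    ext ω; simp [le_abs]
  calc μ.real {ω | ε ≤ |X ω|}
      ≤ μ.real {ω | ε ≤ X ω} + μ.real {ω | ε ≤ (-X) ω} := hunion ▸ measureReal_union_le _ _
    _ ≤ exp (-ε ^ 2 / (2 * v)) + exp (-ε ^ 2 / (2 * v)) :=
        add_le_add (hsub.measure_ge_le hε) (hsub.neg.measure_ge_le hε)
    _ = 2 * exp (-ε ^ 2 / (2 * v)) := by ring

lemma summable_two_pow_mul_exp_neg_pow {ρ : ℝ} (hρ : 1 < ρ) :
    Summable fun n : ℕ => 2 ^ n * exp (-ρ ^ n / 2) := by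
  have hρn : ∀ᶠ n : ℕ in atTop, 4 * (n : ℝ) ≤ ρ ^ n := by
    filter_upwards [(isLittleO_coe_const_pow_of_one_lt (R := ℝ) hρ).bound
      (by norm_num : (0 : ℝ) < 1 / 4)] with n hn
    rw [Real.norm_natCast, Real.norm_of_nonneg (by positivity)] at hn
    linarith
  refine summable_exp_neg_nat.of_norm_bounded_eventually_nat ?_
  filter_upwards [hρn] with n hn
  have h2n : (2 : ℝ) ^ n ≤ exp n := by
    rw [← exp_one_pow]
    exact pow_le_pow_left₀ zero_le_two (by linarith [add_one_le_exp (1 : ℝ)]) n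
  calc ‖2 ^ n * exp (-ρ ^ n / 2)‖ = 2 ^ n * exp (-ρ ^ n / 2) :=
        Real.norm_of_nonneg (by positivity)
    _ ≤ exp n * exp (-(2 * n)) := by
        gcongr
        linarith
    _ = exp (-n) := by rw [← exp_add]; ring_nf

lemma IsBrownianMotion.ae_eventually_dyadicIncrementsLE {Ω : Type*} [MeasurableSpace Ω]
    {μ : Measure Ω} {B : ℝ → Ω → ℝ} (hB : IsBrownianMotion μ B) {r : ℝ} (hr : 0 < r)
    (hr2 : 1 < 2 * r ^ 2) (N : ℕ) :
    ∀ᵐ ω ∂μ, ∀ᶠ n in atTop, DyadicIncrementsLE (B · ω) N n (r ^ n) := by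
  have := hB.isProbabilityMeasure
  set E : ℕ → Set Ω := fun n => ⋃ k ∈ Finset.range (N * 2 ^ n),
    {ω | r ^ n < |B ((k + 1) / 2 ^ n) ω - B (k / 2 ^ n) ω|} with hE
  have hincr : ∀ n k : ℕ, μ.real {ω | r ^ n < |B ((k + 1) / 2 ^ n) ω - B (k / 2 ^ n) ω|}
      ≤ 2 * exp (-(2 * r ^ 2) ^ n / 2) := by
    intro n k
    have hlaw := hB.gauss_incr (k / 2 ^ n) ((k + 1) / 2 ^ n) (by positivity)
      (by gcongr; linarith)
    have hvar : ((Real.toNNReal ((k + 1) / 2 ^ n - k / 2 ^ n) : ℝ≥0) : ℝ) = 1 / 2 ^ n := by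
      rw [show ((k : ℝ) + 1) / 2 ^ n - k / 2 ^ n = 1 / 2 ^ n by ring,
        Real.coe_toNNReal _ (by positivity)]
    calc μ.real {ω | r ^ n < |B ((k + 1) / 2 ^ n) ω - B (k / 2 ^ n) ω|}
        ≤ μ.real {ω | r ^ n ≤ |B ((k + 1) / 2 ^ n) ω - B (k / 2 ^ n) ω|} :=
          measureReal_mono fun ω (h : r ^ n < _) => h.le
      _ ≤ _ := measureReal_abs_ge_le_of_map_eq_gaussianReal
          ((hB.measurable _).sub (hB.measurable _)) hlaw (by positivity)
      _ = 2 * exp (-(2 * r ^ 2) ^ n / 2) := by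
          rw [hvar, mul_pow, ← pow_mul, pow_mul']
          field_simp
  have hEn : ∀ n, μ.real (E n) ≤ 2 * N * (2 ^ n * exp (-(2 * r ^ 2) ^ n / 2)) := by
    intro n
    calc μ.real (E n) ≤ ∑ k ∈ Finset.range (N * 2 ^ n), 2 * exp (-(2 * r ^ 2) ^ n / 2) :=
          (measureReal_biUnion_finset_le _ _).trans (Finset.sum_le_sum fun k _ => hincr n k)
      _ = 2 * N * (2 ^ n * exp (-(2 * r ^ 2) ^ n / 2)) := by
          rw [Finset.sum_const, Finset.card_range, nsmul_eq_mul]; push_cast; ring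
  have hsum : Summable fun n => μ.real (E n) :=
    .of_nonneg_of_le (fun _ => measureReal_nonneg) hEn
      ((summable_two_pow_mul_exp_neg_pow hr2).mul_left _)
  have hfin : ∑' n, μ (E n) ≠ ∞ := by
    rw [tsum_congr fun n => (ofReal_measureReal (measure_ne_top μ (E n))).symm,
      ← ENNReal.ofReal_tsum_of_nonneg (fun _ => measureReal_nonneg) hsum]
    exact ENNReal.ofReal_ne_top
  filter_upwards [ae_eventually_notMem hfin] with ω hω
  filter_upwards [hω] with n hn k hk
  simp only [hE, mem_iUnion, Finset.mem_range, mem_ofPred_eq, not_exists, not_lt] at hn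
  exact hn k hk

lemma one_lt_two_mul_sq_one_half_rpow {β : ℝ} (hβ : β < 1 / 2) :
    1 < 2 * ((1 / 2 : ℝ) ^ β) ^ 2 := by
  rw [← Real.rpow_natCast, ← Real.rpow_mul (by norm_num)]
  have := Real.rpow_lt_rpow_of_exponent_gt (by norm_num : (0 : ℝ) < 1 / 2) (by norm_num)
    (by push_cast; linarith : β * (2 : ℕ) < 1)
  rw [Real.rpow_one] at this
  linarith

theorem IsBrownianMotion.ae_locally_holder {Ω : Type*} [MeasurableSpace Ω] {μ : Measure Ω}
    {B : ℝ → Ω → ℝ} (hB : IsBrownianMotion μ B) :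
    ∀ᵐ ω ∂μ, ∀ β : ℝ, 0 < β → β < 1 / 2 → ∀ N : ℕ, ∃ C δ : ℝ, 0 < δ ∧
      ∀ s ∈ Ico (0 : ℝ) N, ∀ t ∈ Ico (0 : ℝ) N, |s - t| ≤ δ →
        |B s ω - B t ω| ≤ C * |s - t| ^ β := by
  have hdyadic : ∀ᵐ ω ∂μ, ∀ q : ℚ, ∀ N : ℕ, 0 < (q : ℝ) → (q : ℝ) < 1 / 2 →
      ∀ᶠ n in atTop, DyadicIncrementsLE (B · ω) N n (((1 / 2 : ℝ) ^ (q : ℝ)) ^ n) := by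
    refine ae_all_iff.2 fun q => ae_all_iff.2 fun N => ?_
    by_cases hq : (q : ℝ) < 1 / 2
    · filter_upwards [hB.ae_eventually_dyadicIncrementsLE (by positivity)
        (one_lt_two_mul_sq_one_half_rpow hq) N] with ω hω _ _
      exact hω
    · exact ae_of_all _ fun ω _ h => absurd h hq
  filter_upwards [hdyadic] with ω hω β hβ0 hβ N
  obtain ⟨q, hβq, hq⟩ := exists_rat_btwn hβ
  obtain ⟨C, δ, hC, hδ, hHolder⟩ := exists_abs_sub_le_mul_rpow_of_dyadicIncrementsLE
    (hB.cont_paths ω) (hβ0.trans hβq) (hω q N (hβ0.trans hβq) hq)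
  refine ⟨C, min δ 1, lt_min hδ one_pos, fun s hs t ht hst => ?_⟩
  calc |B s ω - B t ω| ≤ C * |s - t| ^ (q : ℝ) := hHolder s hs t ht (hst.trans (min_le_left _ _))
    _ ≤ C * |s - t| ^ β := mul_le_mul_of_nonneg_left (Real.rpow_le_rpow_of_exponent_ge'
        (abs_nonneg _) (hst.trans (min_le_right _ _)) hβ0.le hβq.le) hC

lemma exists_pos_eventually_mul_lt_of_liminf_pos {X : Type*} {l : Filter X} {u v : X → ℝ}
    (hv : ∀ᶠ x in l, 0 < v x) (h : 0 < liminf (fun x => ((u x / v x : ℝ) : EReal)) l) :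
    ∃ c > 0, ∀ᶠ x in l, c * v x < u x := by
  obtain ⟨c, hc0, hc⟩ := EReal.exists_between_coe_real h
  refine ⟨c, by exact_mod_cast hc0, ?_⟩
  filter_upwards [eventually_lt_of_lt_liminf hc, hv] with x hx hvx
  rw [← lt_div_iff₀ hvx]
  exact_mod_cast hx

lemma eventually_sub_ne_of_abs_sub_le_rpow_of_lt_abs_sub {f g : ℝ → ℝ} {t α β c C : ℝ}
    (hαβ : α < β) (hc : 0 < c) (hg : ∀ᶠ s in 𝓝[≠] t, |g s - g t| ≤ C * |t - s| ^ β)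
    (hf : ∀ᶠ s in 𝓝[≠] t, c * |t - s| ^ α < |f s - f t|) :
    ∀ᶠ s in 𝓝[≠] t, g s - f s ≠ g t - f t := by
  have hcont : Continuous fun s => C * |t - s| ^ (β - α) :=
    continuous_const.mul ((continuous_const.sub continuous_id).abs.rpow_const
      fun _ => Or.inr (sub_nonneg.2 hαβ.le))
  have hsmall : ∀ᶠ s in 𝓝[≠] t, C * |t - s| ^ (β - α) < c := by
    refine nhdsWithin_le_nhds ((hcont.tendsto t).eventually (gt_mem_nhds ?_))
    simpa [Real.zero_rpow (sub_pos.2 hαβ).ne'] using hc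
  filter_upwards [hg, hf, hsmall, self_mem_nhdsWithin] with s hgs hfs hsm hne heq
  have hpos : 0 < |t - s| := abs_pos.2 (sub_ne_zero.2 (Ne.symm hne))
  have hgf : g s - g t = f s - f t := by linarith
  refine lt_irrefl |f s - f t| ?_
  calc |f s - f t| = |g s - g t| := by rw [hgf]
    _ ≤ C * |t - s| ^ β := hgs
    _ = C * |t - s| ^ (β - α) * |t - s| ^ α := by
        rw [mul_assoc, ← Real.rpow_add hpos, sub_add_cancel]
    _ < c * |t - s| ^ α := mul_lt_mul_of_pos_right hsm (Real.rpow_pos_of_pos hpos α)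
    _ < |f s - f t| := hfs

lemma isolatedPointOf_zeroSet_of_eventually_ne {g : ℝ → ℝ} {t : ℝ} (ht : 0 < t) (hgt : g t = 0)
    (h : ∀ᶠ s in 𝓝[≠] t, g s ≠ 0) : IsolatedPointOf (zeroSet g) t := by
  obtain ⟨ε, hε, hball⟩ := Metric.mem_nhdsWithin_iff.1 h
  refine ⟨⟨ht, hgt⟩, ε, hε, fun s hs hst => ?_⟩
  by_contra hne
  exact hball ⟨by rwa [Metric.mem_ball, Real.dist_eq], hne⟩ hs.2

theorem zeros_in_reverse_holder_set_isolated_general {Ω : Type*} [MeasurableSpace Ω] (μ : Measure Ω) (B : ℝ → Ω → ℝ)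
    (hB : IsBrownianMotion μ B)
    (f : ℝ → ℝ)
    (A : Set ℝ) (hA : A ⊆ Set.Ioi 0)
    (hrev : ∀ t ∈ A, ∃ α : ℝ, α < 1 / 2 ∧
      0 < Filter.liminf (fun s : ℝ => ((|f s - f t| / |t - s| ^ α : ℝ) : EReal))
        (nhdsWithin t {t}ᶜ)) :
    ∀ᵐ ω ∂μ, ∀ t ∈ A, B t ω - f t = 0 →
      IsolatedPointOf (zeroSet fun s => B s ω - f s) t := by
  filter_upwards [hB.ae_locally_holder] with ω hω t ht hzero
  obtain ⟨α, hα, hlim⟩ := hrev t ht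
  obtain ⟨β, hαβ, hβ⟩ := exists_between (max_lt hα one_half_pos)
  obtain ⟨c, hc, hf⟩ := exists_pos_eventually_mul_lt_of_liminf_pos
    (eventually_nhdsWithin_of_forall fun s (hs : s ≠ t) =>
      Real.rpow_pos_of_pos (abs_pos.2 (sub_ne_zero.2 hs.symm)) α) hlim
  obtain ⟨C, δ, hδ, hHolder⟩ := hω β ((le_max_right α 0).trans_lt hαβ) hβ (⌈t⌉₊ + 1)
  have htN : t ∈ Ico (0 : ℝ) (⌈t⌉₊ + 1 : ℕ) :=
    ⟨(hA ht).le, by push_cast; linarith [Nat.le_ceil t]⟩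
  have hg : ∀ᶠ s in 𝓝[≠] t, |B s ω - B t ω| ≤ C * |t - s| ^ β := by
    filter_upwards [nhdsWithin_le_nhds (Ico_mem_nhds (hA ht) htN.2),
      nhdsWithin_le_nhds (Metric.closedBall_mem_nhds t hδ)] with s hs hsδ
    rw [abs_sub_comm t s]
    exact hHolder s hs t htN hsδ
  refine isolatedPointOf_zeroSet_of_eventually_ne (hA ht) hzero ?_
  filter_upwards [eventually_sub_ne_of_abs_sub_le_rpow_of_lt_abs_sub
    ((le_max_left α 0).trans_lt hαβ) hc hg hf] with s hs
  rwa [hzero] at hs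

/-- If at every point `t` of a set `A ⊆ (0,∞)` the continuous drift `f` satisfies a reverse
Hölder condition of some exponent `α < 1/2` (i.e. `liminf_{s → t} |f s - f t|/|t-s|^α > 0`),
then almost surely every zero of `B - f` lying in `A` is an isolated zero. -/
theorem zeros_in_reverse_holder_set_isolated {Ω : Type*} [MeasurableSpace Ω] (μ : Measure Ω) (B : ℝ → Ω → ℝ)
    (hB : IsBrownianMotion μ B)
    (f : ℝ → ℝ) (hf : ContinuousOn f (Set.Ici 0))
    (A : Set ℝ) (hA : A ⊆ Set.Ioi 0)
    (hrev : ∀ t ∈ A, ∃ α : ℝ, α < 1 / 2 ∧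
      0 < Filter.liminf (fun s : ℝ => ((|f s - f t| / |t - s| ^ α : ℝ) : EReal))
        (nhdsWithin t {t}ᶜ)) :
    ∀ᵐ ω ∂μ, ∀ t ∈ A, B t ω - f t = 0 →
      IsolatedPointOf (zeroSet fun s => B s ω - f s) t :=
  zeros_in_reverse_holder_set_isolated_general μ B hB f A hA hrev
end

section
/- Let f : [0,∞) → ℝ be bounded on every compact interval and let 0 < α < 1. Then the sets B_f^+ = {t ≥ 0 : liminf_{h↓0} (f(t+h)−f(t))/h^α > 0} and B_f^− = {t ≥ 0 : limsup_{h↓0} (f(t+h)−f(t))/h^α < 0} each have Hausdorff dimension at most α. -/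
open MeasureTheory ProbabilityTheory Filter Set Topology
open scoped ENNReal

open scoped NNReal

/-! If `c * h ^ α ≤ |f (t + h) - f t|` for all `h ∈ (0, δ)` and all `t` in a set `S`, then
`c * |s - t| ^ α ≤ |f s - f t|` for `s, t ∈ S` with `|s - t| < δ`. So on a piece of `S` of
diameter `< δ`, `f` is injective with a `1 / α`-Hölder inverse, and the piece has dimension at
most `α * dimH ℝ = α`. Locality and countable stability of `dimH` extend the bound to the set of
all points at which such a growth holds for some `c, δ > 0`; both sets of the theorem lie in it,
since `|f (t + h) - f t| / h ^ α` stays eventually above a positive constant there. -/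

theorem HolderOnWith.of_dist_le {X Y : Type*} [PseudoMetricSpace X] [PseudoMetricSpace Y]
    {C r : ℝ≥0} {f : X → Y} {s : Set X}
    (h : ∀ x ∈ s, ∀ y ∈ s, dist (f x) (f y) ≤ C * dist x y ^ (r : ℝ)) :
    HolderOnWith C r f s := fun x hx y hy => by
  rw [edist_dist, edist_dist, ENNReal.ofReal_rpow_of_nonneg dist_nonneg r.coe_nonneg,
    ← ENNReal.ofReal_coe_nnreal, ← ENNReal.ofReal_mul C.coe_nonneg]
  exact ENNReal.ofReal_le_ofReal (h x hx y hy)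

theorem dimH_le_of_mul_rpow_dist_le {X : Type*} [MetricSpace X] {f : X → ℝ} {s : Set X}
    {c α : ℝ} (hc : 0 < c) (hα : 0 < α)
    (h : ∀ x ∈ s, ∀ y ∈ s, c * dist x y ^ α ≤ dist (f x) (f y)) :
    dimH s ≤ ENNReal.ofReal α := by
  have hdist : ∀ x ∈ s, ∀ y ∈ s, dist x y ≤ c⁻¹ ^ α⁻¹ * dist (f x) (f y) ^ α⁻¹ := by
    intro x hx y hy
    rw [← Real.mul_rpow (by positivity) dist_nonneg]
    calc dist x y = (dist x y ^ α) ^ α⁻¹ := (Real.rpow_rpow_inv dist_nonneg hα.ne').symm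
      _ ≤ (c⁻¹ * dist (f x) (f y)) ^ α⁻¹ := by
        gcongr
        rw [inv_mul_eq_div, le_div_iff₀ hc, mul_comm]
        exact h x hx y hy
  have hinj : InjOn f s := fun x hx y hy hxy => by
    have := hdist x hx y hy
    rw [hxy, dist_self, Real.zero_rpow (by positivity), mul_zero] at this
    exact dist_le_zero.1 this
  rcases s.eq_empty_or_nonempty with rfl | ⟨x₀, -⟩
  · simp
  have : Nonempty X := ⟨x₀⟩
  set r : ℝ≥0 := α.toNNReal⁻¹
  have hr : 0 < r := inv_pos.2 (Real.toNNReal_pos.2 hα)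
  have hg : HolderOnWith (c⁻¹ ^ α⁻¹).toNNReal r (Function.invFunOn f s) (f '' s) := by
    refine .of_dist_le ?_
    rintro _ ⟨x, hx, rfl⟩ _ ⟨y, hy, rfl⟩
    rw [hinj.leftInvOn_invFunOn hx, hinj.leftInvOn_invFunOn hy,
      Real.coe_toNNReal _ (by positivity), NNReal.coe_inv, Real.coe_toNNReal _ hα.le]
    exact hdist x hx y hy
  calc dimH s = dimH (Function.invFunOn f s '' (f '' s)) := by
        rw [hinj.leftInvOn_invFunOn.image_image]
    _ ≤ dimH (f '' s) / r := hg.dimH_image_le hr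
    _ ≤ dimH (univ : Set ℝ) / r := by gcongr; exact subset_univ _
    _ = ENNReal.ofReal α := by
      rw [Real.dimH_univ, one_div, ← ENNReal.coe_inv hr.ne', inv_inv]
      rfl

theorem dimH_le_of_forall_exists_mem_nhdsWithin {X : Type*} [EMetricSpace X]
    [SecondCountableTopology X] {s : Set X} {d : ℝ≥0∞}
    (h : ∀ x ∈ s, ∃ t ∈ 𝓝[s] x, dimH t ≤ d) : dimH s ≤ d := by
  contrapose! h
  obtain ⟨x, hx, hlt⟩ := exists_mem_nhdsWithin_lt_dimH_of_lt_dimH h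
  exact ⟨x, hx, fun t ht => hlt t ht⟩

def rightGrowthSet (f : ℝ → ℝ) (α : ℝ) : Set ℝ :=
  {t | ∃ c > 0, ∀ᶠ h in 𝓝[>] 0, c * h ^ α ≤ |f (t + h) - f t|}

def uniformRightGrowthSet (f : ℝ → ℝ) (α c δ : ℝ) : Set ℝ :=
  {t | ∀ h ∈ Ioo 0 δ, c * h ^ α ≤ |f (t + h) - f t|}

section GrowthSets

variable {f : ℝ → ℝ} {α c δ : ℝ}

theorem mul_rpow_dist_le_of_mem_uniformRightGrowthSet (hα : 0 < α) {t s : ℝ}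
    (ht : t ∈ uniformRightGrowthSet f α c δ) (hs : s ∈ uniformRightGrowthSet f α c δ)
    (hts : dist t s < δ) : c * dist t s ^ α ≤ dist (f t) (f s) := by
  wlog hle : t ≤ s generalizing t s
  · rw [dist_comm, dist_comm (f t)]
    exact this hs ht (dist_comm t s ▸ hts) (le_of_not_ge hle)
  rcases hle.eq_or_lt with rfl | hlt
  · simp [Real.zero_rpow hα.ne']
  have hdist : dist t s = s - t := by
    rw [dist_comm, Real.dist_eq, abs_of_pos (sub_pos.2 hlt)]
  rw [hdist] at hts ⊢
  rw [dist_comm, Real.dist_eq]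
  simpa using ht (s - t) ⟨sub_pos.2 hlt, hts⟩

theorem dimH_uniformRightGrowthSet_le (hα : 0 < α) (hc : 0 < c) (hδ : 0 < δ) :
    dimH (uniformRightGrowthSet f α c δ) ≤ ENNReal.ofReal α := by
  refine dimH_le_of_forall_exists_mem_nhdsWithin fun x _ =>
    ⟨_, inter_mem_nhdsWithin _ (Metric.ball_mem_nhds x (half_pos hδ)),
      dimH_le_of_mul_rpow_dist_le (f := f) hc hα ?_⟩
  rintro t ⟨ht, htx⟩ s ⟨hs, hsx⟩
  refine mul_rpow_dist_le_of_mem_uniformRightGrowthSet hα ht hs ?_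
  calc dist t s ≤ dist t x + dist s x := dist_triangle_right t s x
    _ < δ / 2 + δ / 2 := add_lt_add htx hsx
    _ = δ := add_halves δ

theorem rightGrowthSet_subset_iUnion :
    rightGrowthSet f α ⊆ ⋃ n : ℕ, uniformRightGrowthSet f α (1 / (n + 1)) (1 / (n + 1)) := by
  rintro t ⟨c, hc, hev⟩
  obtain ⟨δ, hδ, hsub⟩ := mem_nhdsGT_iff_exists_Ioo_subset.1 hev
  obtain ⟨n, hn⟩ := exists_nat_one_div_lt (lt_min hc hδ)
  refine mem_iUnion.2 ⟨n, fun h ⟨h0, hh⟩ => ?_⟩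
  calc 1 / (n + 1) * h ^ α ≤ c * h ^ α := by
        gcongr; exact hn.le.trans (min_le_left _ _)
    _ ≤ |f (t + h) - f t| := hsub ⟨h0, hh.trans (hn.trans_le (min_le_right _ _))⟩

theorem dimH_rightGrowthSet_le (hα : 0 < α) :
    dimH (rightGrowthSet f α) ≤ ENNReal.ofReal α := by
  refine (dimH_mono rightGrowthSet_subset_iUnion).trans ?_
  rw [dimH_iUnion]
  exact iSup_le fun n => dimH_uniformRightGrowthSet_le hα (by positivity) (by positivity)

theorem mem_rightGrowthSet_of_eventually_lt_abs_div {t : ℝ} (hc : 0 < c)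
    (h : ∀ᶠ h in 𝓝[>] 0, c < |(f (t + h) - f t) / h ^ α|) : t ∈ rightGrowthSet f α := by
  refine ⟨c, hc, ?_⟩
  filter_upwards [h, self_mem_nhdsWithin] with h hlt (hh : 0 < h)
  have hpos : 0 < h ^ α := Real.rpow_pos_of_pos hh α
  rw [abs_div, abs_of_pos hpos, lt_div_iff₀ hpos] at hlt
  exact hlt.le

end GrowthSets

theorem EReal.exists_pos_eventually_lt_of_pos_liminf {ι : Type*} {l : Filter ι} {u : ι → ℝ}
    (h : 0 < liminf (fun x => (u x : EReal)) l) : ∃ c > 0, ∀ᶠ x in l, c < u x := by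
  obtain ⟨c, hc0, hc⟩ := EReal.lt_iff_exists_real_btwn.1 h
  exact ⟨c, mod_cast hc0, (eventually_lt_of_lt_liminf hc).mono fun _ hx => mod_cast hx⟩

theorem EReal.exists_pos_eventually_lt_neg_of_limsup_neg {ι : Type*} {l : Filter ι} {u : ι → ℝ}
    (h : limsup (fun x => (u x : EReal)) l < 0) : ∃ c > 0, ∀ᶠ x in l, u x < -c := by
  obtain ⟨c, hc, hc0⟩ := EReal.lt_iff_exists_real_btwn.1 h
  refine ⟨-c, neg_pos.2 (mod_cast hc0), (eventually_lt_of_limsup_lt hc).mono fun _ hx => ?_⟩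
  rw [neg_neg]
  exact mod_cast hx

theorem dimH_one_sided_growth_sets_le_general (f : ℝ → ℝ) (α : ℝ) (hα0 : 0 < α) :
    dimH {t : ℝ | 0 ≤ t ∧ 0 < Filter.liminf
        (fun h : ℝ => (((f (t + h) - f t) / h ^ α : ℝ) : EReal))
        (nhdsWithin 0 (Set.Ioi 0))} ≤ ENNReal.ofReal α ∧
    dimH {t : ℝ | 0 ≤ t ∧ Filter.limsup
        (fun h : ℝ => (((f (t + h) - f t) / h ^ α : ℝ) : EReal))
        (nhdsWithin 0 (Set.Ioi 0)) < 0} ≤ ENNReal.ofReal α := by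
  refine ⟨(dimH_mono ?_).trans (dimH_rightGrowthSet_le (f := f) hα0),
    (dimH_mono ?_).trans (dimH_rightGrowthSet_le (f := f) hα0)⟩
  · rintro t ⟨-, ht⟩
    obtain ⟨c, hc, hev⟩ := EReal.exists_pos_eventually_lt_of_pos_liminf ht
    exact mem_rightGrowthSet_of_eventually_lt_abs_div hc
      (hev.mono fun _ h => h.trans_le (le_abs_self _))
  · rintro t ⟨-, ht⟩
    obtain ⟨c, hc, hev⟩ := EReal.exists_pos_eventually_lt_neg_of_limsup_neg ht
    exact mem_rightGrowthSet_of_eventually_lt_abs_div hc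
      (hev.mono fun _ h => lt_abs.2 (Or.inr (lt_neg_of_lt_neg h)))

/-- For `f : [0,∞) → ℝ` bounded on compact intervals and `0 < α < 1`, the sets of points at
which `liminf_{h↓0} (f (t+h) - f t)/h^α > 0`, resp. `limsup_{h↓0} (f (t+h) - f t)/h^α < 0`,
each have Hausdorff dimension at most `α`. -/
theorem dimH_one_sided_growth_sets_le (f : ℝ → ℝ)
    (hf : ∀ a b : ℝ, 0 ≤ a → ∃ M : ℝ, ∀ t ∈ Set.Icc a b, |f t| ≤ M)
    (α : ℝ) (hα0 : 0 < α) (hα1 : α < 1) :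
    dimH {t : ℝ | 0 ≤ t ∧ 0 < Filter.liminf
        (fun h : ℝ => (((f (t + h) - f t) / h ^ α : ℝ) : EReal))
        (nhdsWithin 0 (Set.Ioi 0))} ≤ ENNReal.ofReal α ∧
    dimH {t : ℝ | 0 ≤ t ∧ Filter.limsup
        (fun h : ℝ => (((f (t + h) - f t) / h ^ α : ℝ) : EReal))
        (nhdsWithin 0 (Set.Ioi 0)) < 0} ≤ ENNReal.ofReal α :=
  dimH_one_sided_growth_sets_le_general f α hα0
end

section
/- Let f : [0,∞) → ℝ have bounded variation on every compact interval and let 0 < α < 1. Then the set B_f = {t ≥ 0 : limsup_{h↓0} |f(t+h)−f(t)|/h^α > 0} has Hausdorff dimension at most α. -/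
/-!
The variation function `t ↦ V(0, t)` of `f` on `[0, ∞)` is a monotone `W` with
`|f (t + h) - f t| ≤ W (t + h) - W t`. A point of the set therefore satisfies
`W (t + h) - W t ≥ c h^α` for arbitrarily small `h`, for some `c > 0`. Given `δ > 0`, a Vitali
covering argument selects disjoint intervals `[t, t + h]` with `h < δ` whose fivefold enlargements
cover the bounded part of the set; since the `W`-increments over disjoint intervals add up to at
most the total increment of `W`, the cover has `∑ (5h)^β ≤ 5^β δ^(β - α) c⁻¹ (W (b + 1) - W a)`,
which tends to `0` with `δ` whenever `β > α`.
-/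

open MeasureTheory ProbabilityTheory Filter Set Topology
open scoped ENNReal

open Metric Function

lemma LocallyBoundedVariationOn.exists_monotone_abs_sub_le {f : ℝ → ℝ} {a : ℝ}
    (hf : LocallyBoundedVariationOn f (Ici a)) :
    ∃ W : ℝ → ℝ, Monotone W ∧ ∀ x y, a ≤ x → x ≤ y → |f y - f x| ≤ W y - W x := by
  have ha : a ∈ Ici a := self_mem_Ici
  refine ⟨fun x => variationOnFromTo f (Ici a) a (max x a), fun x y hxy => ?_,
    fun x y hx hxy => ?_⟩
  · exact variationOnFromTo.monotoneOn hf ha (le_max_right x a) (le_max_right y a)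
      (max_le_max_right a hxy)
  · simpa only [max_eq_left hx, max_eq_left (hx.trans hxy)] using
      variationOnFromTo.abs_sub_le_sub_of_le hf ha hx (hx.trans hxy) hxy

lemma tsum_ofReal_sub_le_of_pairwise_disjoint_Icc {ι : Type*} [Countable ι] {W : ℝ → ℝ}
    (hW : Monotone W) {x y : ι → ℝ} {a b : ℝ} (ha : ∀ i, a ≤ x i) (hb : ∀ i, y i ≤ b)
    (hxy : Pairwise (Disjoint on fun i => Icc (x i) (y i))) :
    ∑' i, ENNReal.ofReal (W (y i) - W (x i)) ≤ ENNReal.ofReal (W b - W a) := by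
  have hdisj : Pairwise (Disjoint on fun i => Ioo (W (x i)) (W (y i))) := by
    refine fun i j hij => disjoint_left.2 fun z hzi hzj =>
      disjoint_left.1 (hxy hij)
        (show max (x i) (x j) ∈ Icc (x i) (y i) from ⟨le_max_left _ _, max_le ?_ ?_⟩)
        ⟨le_max_right _ _, max_le ?_ ?_⟩
    all_goals exact hW.reflect_lt (by linarith [hzi.1, hzi.2, hzj.1, hzj.2]) |>.le
  -- the increments are the lengths of the disjoint intervals `(W (x i), W (y i)) ⊆ [W a, W b]`
  calc ∑' i, ENNReal.ofReal (W (y i) - W (x i))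
      = ∑' i, volume (Ioo (W (x i)) (W (y i))) := by simp only [Real.volume_Ioo]
    _ = volume (⋃ i, Ioo (W (x i)) (W (y i))) :=
        (measure_iUnion hdisj fun _ => measurableSet_Ioo).symm
    _ ≤ volume (Icc (W a) (W b)) :=
        measure_mono (iUnion_subset fun i _ hz =>
          ⟨(hW (ha i)).trans hz.1.le, hz.2.le.trans (hW (hb i))⟩)
    _ = ENNReal.ofReal (W b - W a) := Real.volume_Icc

lemma exists_countable_pairwiseDisjoint_Icc_cover {P : ℝ → ℝ → Prop} {E : Set ℝ}
    (hP : ∀ t ∈ E, ∃ᶠ h in 𝓝[>] 0, P t h) {δ : ℝ} (hδ : 0 < δ) :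
    ∃ u ⊆ E, u.Countable ∧ ∃ h : ℝ → ℝ, (∀ t ∈ u, h t ∈ Ioo 0 δ ∧ P t (h t)) ∧
      u.PairwiseDisjoint (fun t => Icc t (t + h t)) ∧
      E ⊆ ⋃ t ∈ u, Icc (t - 2 * h t) (t + 3 * h t) := by
  have hsmall : ∀ t ∈ E, ∃ h, h ∈ Ioo 0 δ ∧ P t h := fun t ht =>
    ((hP t ht).and_eventually (Ioo_mem_nhdsGT hδ)).exists.imp fun _ hh => hh.symm
  choose! h hh using hsmall
  have hball : ∀ t, closedBall (t + h t / 2) (h t / 2) = Icc t (t + h t) := fun t => by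
    rw [Real.closedBall_eq_Icc]; ring_nf
  have hball5 : ∀ t, closedBall (t + h t / 2) (5 * (h t / 2)) =
      Icc (t - 2 * h t) (t + 3 * h t) := fun t => by
    rw [Real.closedBall_eq_Icc]; ring_nf
  obtain ⟨u, huE, hdisj, hcov⟩ :=
    Vitali.exists_disjoint_subfamily_covering_enlargement_closedBall E
      (fun t => t + h t / 2) (fun t => h t / 2) δ
      (fun t ht => by linarith [(hh t ht).1.1, (hh t ht).1.2]) 5 (by norm_num)
  simp only [hball, hball5] at hdisj hcov
  refine ⟨u, huE, ?_, h, fun t ht => hh t (huE ht), hdisj, fun t ht => ?_⟩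
  · refine (hdisj.mono fun t => Ioo_subset_Icc_self).countable_of_Ioo fun t ht => ?_
    linarith [(hh t (huE ht)).1.1]
  · obtain ⟨s, hs, hts⟩ := hcov t ht
    have ht0 := (hh t ht).1.1
    exact mem_biUnion hs (hts ⟨by linarith, by linarith⟩)

lemma rpow_le_rpow_sub_mul_rpow {h δ α β : ℝ} (h0 : 0 < h) (hδ : h ≤ δ) (hαβ : α ≤ β) :
    h ^ β ≤ δ ^ (β - α) * h ^ α :=
  calc h ^ β = h ^ (β - α) * h ^ α := by rw [← Real.rpow_add h0, sub_add_cancel]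
    _ ≤ δ ^ (β - α) * h ^ α := by gcongr

lemma tsum_ediam_Icc_rpow_le {W : ℝ → ℝ} (hW : Monotone W) {u : Set ℝ} (hu : u.Countable)
    {a b : ℝ} (hub : u ⊆ Icc a b) {h : ℝ → ℝ} {c δ α β : ℝ} (hc : 0 < c) (hδ0 : 0 ≤ δ)
    (hδ1 : δ ≤ 1) (hαβ : α ≤ β) (hβ : 0 ≤ β)
    (hh : ∀ t ∈ u, h t ∈ Ioo 0 δ ∧ c * h t ^ α ≤ W (t + h t) - W t)
    (hdisj : u.PairwiseDisjoint fun t => Icc t (t + h t)) :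
    ∑' t : u, ediam (Icc (t - 2 * h t) (t + 3 * h t)) ^ β ≤
      ENNReal.ofReal (5 ^ β * δ ^ (β - α) / c * (W (b + 1) - W a)) := by
  have := hu.to_subtype
  set K := 5 ^ β * δ ^ (β - α) / c
  have hK : 0 ≤ K := by positivity
  have hterm : ∀ t ∈ u, ediam (Icc (t - 2 * h t) (t + 3 * h t)) ^ β ≤
      ENNReal.ofReal K * ENNReal.ofReal (W (t + h t) - W t) := by
    intro t ht
    obtain ⟨⟨h0, hδt⟩, hosc⟩ := hh t ht
    rw [Real.ediam_Icc, ENNReal.ofReal_rpow_of_nonneg (by linarith) hβ,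
      ← ENNReal.ofReal_mul hK]
    refine ENNReal.ofReal_le_ofReal ?_
    calc (t + 3 * h t - (t - 2 * h t)) ^ β = 5 ^ β * h t ^ β := by
          rw [← Real.mul_rpow (by norm_num) h0.le]; ring_nf
      _ ≤ 5 ^ β * (δ ^ (β - α) * h t ^ α) := by
          gcongr; exact rpow_le_rpow_sub_mul_rpow h0 hδt.le hαβ
      _ = K * (c * h t ^ α) := by simp only [K]; field_simp
      _ ≤ K * (W (t + h t) - W t) := by gcongr
  calc ∑' t : u, ediam (Icc (t - 2 * h t) (t + 3 * h t)) ^ β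
      ≤ ∑' t : u, ENNReal.ofReal K * ENNReal.ofReal (W (t + h t) - W t) :=
        ENNReal.tsum_le_tsum fun t => hterm t t.2
    _ = ENNReal.ofReal K * ∑' t : u, ENNReal.ofReal (W (t + h t) - W t) := ENNReal.tsum_mul_left
    _ ≤ ENNReal.ofReal K * ENNReal.ofReal (W (b + 1) - W a) := by
        gcongr
        refine tsum_ofReal_sub_le_of_pairwise_disjoint_Icc hW (fun t => (hub t.2).1)
          (fun t => ?_) fun s t hst => hdisj s.2 t.2 (Subtype.coe_injective.ne hst)
        linarith [(hub t.2).2, (hh t t.2).1.2, hδ1]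
    _ = ENNReal.ofReal (K * (W (b + 1) - W a)) := (ENNReal.ofReal_mul hK).symm

lemma hausdorffMeasure_eq_zero_of_frequently_rpow_le_sub {W : ℝ → ℝ} (hW : Monotone W)
    {E : Set ℝ} {a b : ℝ} (hE : E ⊆ Icc a b) {c α β : ℝ} (hc : 0 < c) (hαβ : α < β)
    (hβ : 0 ≤ β) (hosc : ∀ t ∈ E, ∃ᶠ h in 𝓝[>] 0, c * h ^ α ≤ W (t + h) - W t) :
    μH[β] E = 0 := by
  set δ : ℕ → ℝ := fun n => 1 / ((n : ℝ) + 1)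
  have hδ0 : ∀ n, 0 < δ n := fun n => Nat.one_div_pos_of_nat
  have hδ1 : ∀ n, δ n ≤ 1 := fun n => div_le_one_of_le₀ (by simp) (by positivity)
  have hδ : Tendsto δ atTop (𝓝 0) := tendsto_one_div_add_atTop_nhds_zero_nat
  choose u huE hu h hh hdisj hcov using
    fun n => exists_countable_pairwiseDisjoint_Icc_cover hosc (hδ0 n)
  have := fun n => (hu n).to_subtype
  have hcover : μH[β] E ≤
      liminf (fun n => ∑' t : u n, ediam (Icc (t - 2 * h n t) (t + 3 * h n t)) ^ β) atTop := by
    refine Measure.hausdorffMeasure_le_liminf_tsum β E (fun n => ENNReal.ofReal (5 * δ n))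
      (by simpa using ENNReal.tendsto_ofReal (hδ.const_mul 5)) _
      (Eventually.of_forall fun n t => ?_) (Eventually.of_forall fun n => ?_)
    · rw [Real.ediam_Icc]
      exact ENNReal.ofReal_le_ofReal (by linarith [(hh n t t.2).1.2])
    · simpa only [biUnion_eq_iUnion] using hcov n
  have hlim : Tendsto (fun n => ENNReal.ofReal (5 ^ β * δ n ^ (β - α) / c * (W (b + 1) - W a)))
      atTop (𝓝 0) := by
    have hγ : 0 < β - α := sub_pos.2 hαβ
    have := hδ.rpow_const (Or.inr hγ.le)
    rw [Real.zero_rpow hγ.ne'] at this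
    simpa using ENNReal.tendsto_ofReal (((this.const_mul _).div_const c).mul_const _)
  refine le_antisymm ?_ zero_le
  calc μH[β] E
      ≤ liminf (fun n => ∑' t : u n, ediam (Icc (t - 2 * h n t) (t + 3 * h n t)) ^ β) atTop :=
        hcover
    _ ≤ liminf (fun n => ENNReal.ofReal (5 ^ β * δ n ^ (β - α) / c * (W (b + 1) - W a)))
          atTop :=
        liminf_le_liminf (Eventually.of_forall fun n => tsum_ediam_Icc_rpow_le hW (hu n)
          ((huE n).trans hE) hc (hδ0 n).le (hδ1 n) hαβ.le hβ (hh n) (hdisj n))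
    _ = 0 := hlim.liminf_eq

lemma dimH_le_of_frequently_rpow_le_sub {W : ℝ → ℝ} (hW : Monotone W) {E : Set ℝ} {a b : ℝ}
    (hE : E ⊆ Icc a b) {c α : ℝ} (hc : 0 < c)
    (hosc : ∀ t ∈ E, ∃ᶠ h in 𝓝[>] 0, c * h ^ α ≤ W (t + h) - W t) :
    dimH E ≤ ENNReal.ofReal α := by
  refine dimH_le fun d hd => le_of_not_gt fun hlt => ?_
  rw [← ENNReal.ofReal_coe_nnreal, ENNReal.ofReal_lt_ofReal_iff'] at hlt
  rw [hausdorffMeasure_eq_zero_of_frequently_rpow_le_sub hW hE hc hlt.1 d.2 hosc] at hd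
  exact ENNReal.zero_ne_top hd

lemma exists_nat_frequently_inv_lt_of_limsup_pos {ι : Type*} {l : Filter ι} {g : ι → ℝ}
    (hg : 0 < limsup (fun x => (g x : EReal)) l) : ∃ n : ℕ, ∃ᶠ x in l, ((n : ℝ) + 1)⁻¹ < g x := by
  obtain ⟨ε, hε0, hεg⟩ := EReal.exists_between_coe_real hg
  obtain ⟨n, hn⟩ := exists_nat_one_div_lt (EReal.coe_pos.1 hε0)
  refine ⟨n, (frequently_lt_of_lt_limsup (by isBoundedDefault) hεg).mono fun x hx => ?_⟩
  rw [inv_eq_one_div]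
  exact hn.trans (EReal.coe_lt_coe_iff.1 hx)

theorem dimH_fast_oscillation_set_le_general (f : ℝ → ℝ)
    (hf : ∀ a b : ℝ, 0 ≤ a → BoundedVariationOn f (Set.Icc a b))
    (α : ℝ) :
    dimH {t : ℝ | 0 ≤ t ∧ 0 < Filter.limsup
        (fun h : ℝ => ((|f (t + h) - f t| / h ^ α : ℝ) : EReal))
        (nhdsWithin 0 (Set.Ioi 0))} ≤ ENNReal.ofReal α := by
  have hloc : LocallyBoundedVariationOn f (Ici 0) := fun a b ha _ =>
    (hf a b ha).mono inter_subset_right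
  obtain ⟨W, hW, hfW⟩ := hloc.exists_monotone_abs_sub_le
  have hsub : {t : ℝ | 0 ≤ t ∧ 0 < Filter.limsup
        (fun h : ℝ => ((|f (t + h) - f t| / h ^ α : ℝ) : EReal))
        (nhdsWithin 0 (Set.Ioi 0))} ⊆ ⋃ (N : ℕ) (n : ℕ), {t ∈ Icc 0 (N : ℝ) |
          ∃ᶠ h in 𝓝[>] 0, ((n : ℝ) + 1)⁻¹ * h ^ α ≤ W (t + h) - W t} := by
    rintro t ⟨ht, hlim⟩
    obtain ⟨N, hN⟩ := exists_nat_ge t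
    obtain ⟨n, hn⟩ := exists_nat_frequently_inv_lt_of_limsup_pos hlim
    refine mem_iUnion₂.2 ⟨N, n, ⟨ht, hN⟩, (hn.and_eventually self_mem_nhdsWithin).mono ?_⟩
    rintro h ⟨hlt, hh : 0 < h⟩
    calc ((n : ℝ) + 1)⁻¹ * h ^ α ≤ |f (t + h) - f t| :=
          ((lt_div_iff₀ (Real.rpow_pos_of_pos hh α)).1 hlt).le
      _ ≤ W (t + h) - W t := hfW t (t + h) ht (by linarith)
  refine (dimH_mono hsub).trans ?_
  simp only [dimH_iUnion]
  exact iSup₂_le fun N n => dimH_le_of_frequently_rpow_le_sub hW (fun t ht => ht.1)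
    (by positivity) fun t ht => ht.2

/-- For `f : [0,∞) → ℝ` of bounded variation on compact intervals and `0 < α < 1`, the set of
points at which `limsup_{h↓0} |f (t+h) - f t|/h^α > 0` has Hausdorff dimension at most `α`. -/
theorem dimH_fast_oscillation_set_le (f : ℝ → ℝ)
    (hf : ∀ a b : ℝ, 0 ≤ a → BoundedVariationOn f (Set.Icc a b))
    (α : ℝ) (hα0 : 0 < α) (hα1 : α < 1) :
    dimH {t : ℝ | 0 ≤ t ∧ 0 < Filter.limsup
        (fun h : ℝ => ((|f (t + h) - f t| / h ^ α : ℝ) : EReal))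
        (nhdsWithin 0 (Set.Ioi 0))} ≤ ENNReal.ofReal α :=
  dimH_fast_oscillation_set_le_general f hf α
end
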